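/- The backward shift B is bounded on H^p(T) if and only if the set {K(1,n)^{p−1}·γ(n+1)/γ(n) : n ≥ 0} is bounded, in which case ‖B‖ = (sup_n K(1,n)^{p−1}γ(n+1)/γ(n))^{1/p}. The same characterization and norm formula hold on H^p_0(T). -/

import Mathlib

open scoped BigOperators
open Classical

/-- An infinite, locally finite rooted tree, presented combinatorially via a
parent function and a level (distance-to-root) function.  Every level is a
finite nonempty set of vertices. -/
structure HTree where
  V : Type
  root : V
  parent : V → V
  level : V → ℕ
  level_root : level root = 0
  root_of_level_zero : ∀ v, level v = 0 → v = root
  level_parent : ∀ v, v ≠ root → level (parent v) + 1 = level v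
  finite_level : ∀ n : ℕ, {v : V | level v = n}.Finite
  nonempty_level : ∀ n : ℕ, {v : V | level v = n}.Nonempty

namespace HTree

variable (T : HTree)

/-- The finite set of vertices at level `n`. -/
noncomputable def levelFinset (n : ℕ) : Finset T.V := (T.finite_level n).toFinset

/-- `γ(n)`, the number of vertices at level `n`. -/
noncomputable def gamma (n : ℕ) : ℕ := (T.levelFinset n).card

/-- The set of `m`-children of a vertex `v`. -/
noncomputable def nChildrenFinset (m : ℕ) (v : T.V) : Finset T.V :=
  (T.levelFinset (T.level v + m)).filter (fun w => T.parent^[m] w = v)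

/-- `γ(m,v)`, the number of `m`-children of `v`. -/
noncomputable def numNChildren (m : ℕ) (v : T.V) : ℕ := (T.nChildrenFinset m v).card

/-- The set of children of a vertex. -/
noncomputable def childrenFinset (v : T.V) : Finset T.V := T.nChildrenFinset 1 v

/-- `γ(1,v)`, the number of children of `v`. -/
noncomputable def numChildren (v : T.V) : ℕ := T.numNChildren 1 v

/-- `K(m,r)`, the maximal number of `m`-children among vertices at level `r`. -/
noncomputable def K (m r : ℕ) : ℕ := (T.levelFinset r).sup (fun v => T.numNChildren m v)

/-- `M_p^p(n,f)`, the `p`-th power of the `p`-th mean of `|f|` over level `n`. -/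
noncomputable def Mpp (p : ℝ) (f : T.V → ℂ) (n : ℕ) : ℝ :=
  (1 / (T.gamma n : ℝ)) * ∑ v ∈ T.levelFinset n, ‖f v‖ ^ p

/-- `M_p(n,f)`, the `p`-th mean of `|f|` over level `n`. -/
noncomputable def Mp (p : ℝ) (f : T.V → ℂ) (n : ℕ) : ℝ := (T.Mpp p f n) ^ (1 / p)

/-- Membership in the Hardy space `H^p(T)`. -/
def MemHp (p : ℝ) (f : T.V → ℂ) : Prop := ∃ C : ℝ, ∀ n : ℕ, T.Mp p f n ≤ C

/-- Membership in the little Hardy space `H^p_0(T)`. -/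
def MemHp0 (p : ℝ) (f : T.V → ℂ) : Prop :=
  Filter.Tendsto (T.Mp p f) Filter.atTop (nhds 0)

/-- The `H^p` norm, `sup_n M_p(n,f)`. -/
noncomputable def Hnorm (p : ℝ) (f : T.V → ℂ) : ℝ := ⨆ n : ℕ, T.Mp p f n

/-- The forward shift `(Sf)(v) = f(parent v)`, `(Sf)(root) = 0`. -/
noncomputable def S (f : T.V → ℂ) : T.V → ℂ := fun v => if v = T.root then 0 else f (T.parent v)

/-- The backward shift `(Bf)(v) = Σ_{w child of v} f(w)`. -/
noncomputable def B (f : T.V → ℂ) : T.V → ℂ := fun v => ∑ w ∈ T.childrenFinset v, f w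

/-- An operator `A` is bounded on the subspace described by `Mem`, with the
`H^p` norm. -/
def BoundedOn (A : (T.V → ℂ) → (T.V → ℂ)) (Mem : (T.V → ℂ) → Prop) (p : ℝ) : Prop :=
  ∃ C : ℝ, 0 ≤ C ∧ ∀ f, Mem f → Mem (A f) ∧ T.Hnorm p (A f) ≤ C * T.Hnorm p f

/-- The operator norm of `A` on the subspace described by `Mem`. -/
noncomputable def opNorm (A : (T.V → ℂ) → (T.V → ℂ)) (Mem : (T.V → ℂ) → Prop) (p : ℝ) : ℝ :=
  sInf {C : ℝ | 0 ≤ C ∧ ∀ f, Mem f → Mem (A f) ∧ T.Hnorm p (A f) ≤ C * T.Hnorm p f}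

/-- Hypercyclicity of an operator `A` on the subspace described by `Mem`. -/
def Hypercyclic (A : (T.V → ℂ) → (T.V → ℂ)) (Mem : (T.V → ℂ) → Prop) (p : ℝ) : Prop :=
  ∃ f, Mem f ∧ ∀ g, Mem g → ∀ ε : ℝ, 0 < ε →
    ∃ N : ℕ, T.Hnorm p (fun v => A^[N] f v - g v) < ε

end HTree

/-!
Grouping the vertices of level `n + 1` by their parents, `Σ_{|v|=n} |Bf(v)|^p` is a sum over `v`
of `|Σ_{w child of v} f(w)|^p`, and the power-mean inequality `|a_1 + ⋯ + a_k|^p ≤ k^{p-1} Σ |a_i|^p`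
with `k ≤ K(1,n)` gives `M_p^p(n, Bf) ≤ K(1,n)^{p-1} γ(n+1)/γ(n) · M_p^p(n+1, f)`.
The constant is sharp: for a vertex `v` of level `n` with `K(1,n)` children, the indicator of the
children of `v` lies in `H^p_0(T)`, and `B` maps it to `K(1,n)` times the indicator of `v`.
-/

namespace HTree

variable (T : HTree)

lemma mem_levelFinset {v : T.V} {n : ℕ} : v ∈ T.levelFinset n ↔ T.level v = n := by
  simp [levelFinset]

lemma gamma_pos (n : ℕ) : 0 < T.gamma n := by
  obtain ⟨v, hv⟩ := T.nonempty_level n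
  exact Finset.card_pos.2 ⟨v, T.mem_levelFinset.2 hv⟩

lemma mem_childrenFinset {v w : T.V} :
    w ∈ T.childrenFinset v ↔ T.level w = T.level v + 1 ∧ T.parent w = v := by
  simp [childrenFinset, nChildrenFinset, mem_levelFinset]

lemma parent_mem_levelFinset {w : T.V} {n : ℕ} (hw : w ∈ T.levelFinset (n + 1)) :
    T.parent w ∈ T.levelFinset n := by
  have hlw : T.level w = n + 1 := T.mem_levelFinset.1 hw
  have hw_root : w ≠ T.root := by
    rintro rfl
    simp [T.level_root] at hlw
  have := T.level_parent w hw_root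
  exact T.mem_levelFinset.2 (by omega)

lemma childrenFinset_eq_filter {v : T.V} {n : ℕ} (hv : v ∈ T.levelFinset n) :
    T.childrenFinset v = (T.levelFinset (n + 1)).filter (fun w => T.parent w = v) := by
  ext w
  simp [mem_childrenFinset, mem_levelFinset, T.mem_levelFinset.1 hv]

lemma sum_levelFinset_succ {M : Type*} [AddCommMonoid M] (n : ℕ) (g : T.V → M) :
    ∑ w ∈ T.levelFinset (n + 1), g w
      = ∑ v ∈ T.levelFinset n, ∑ w ∈ T.childrenFinset v, g w := by
  rw [← Finset.sum_fiberwise_of_maps_to (fun w hw => T.parent_mem_levelFinset hw) g]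
  exact Finset.sum_congr rfl fun v hv => by rw [T.childrenFinset_eq_filter hv]

lemma numChildren_le_K {v : T.V} {n : ℕ} (hv : v ∈ T.levelFinset n) :
    T.numChildren v ≤ T.K 1 n :=
  Finset.le_sup (f := fun v => T.numNChildren 1 v) hv

lemma exists_numChildren_eq_K (n : ℕ) : ∃ v ∈ T.levelFinset n, T.numChildren v = T.K 1 n := by
  obtain ⟨v, hv⟩ := T.nonempty_level n
  obtain ⟨w, hw, hsup⟩ := Finset.exists_mem_eq_sup (T.levelFinset n)
    ⟨v, T.mem_levelFinset.2 hv⟩ (fun v => T.numNChildren 1 v)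
  exact ⟨w, hw, hsup.symm⟩

lemma one_le_K (n : ℕ) : 1 ≤ T.K 1 n := by
  obtain ⟨w, hw⟩ := T.nonempty_level (n + 1)
  have hw' : w ∈ T.levelFinset (n + 1) := T.mem_levelFinset.2 hw
  have hparent := T.parent_mem_levelFinset hw'
  have hchild : w ∈ T.childrenFinset (T.parent w) := by
    rw [T.childrenFinset_eq_filter hparent, Finset.mem_filter]
    exact ⟨hw', rfl⟩
  exact (Finset.card_pos.2 ⟨w, hchild⟩).trans_le (T.numChildren_le_K hparent)

lemma Mpp_nonneg (p : ℝ) (f : T.V → ℂ) (n : ℕ) : 0 ≤ T.Mpp p f n :=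
  mul_nonneg (by positivity) (Finset.sum_nonneg fun v _ => by positivity)

lemma Mp_nonneg (p : ℝ) (f : T.V → ℂ) (n : ℕ) : 0 ≤ T.Mp p f n :=
  Real.rpow_nonneg (T.Mpp_nonneg p f n) _

lemma Mp_eq_zero_of_vanishes_on_level {p : ℝ} (hp : 0 < p) {f : T.V → ℂ} {n : ℕ}
    (hf : ∀ v ∈ T.levelFinset n, f v = 0) : T.Mp p f n = 0 := by
  have hsum : ∑ v ∈ T.levelFinset n, ‖f v‖ ^ p = 0 :=
    Finset.sum_eq_zero fun v hv => by rw [hf v hv, norm_zero, Real.zero_rpow hp.ne']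
  rw [Mp, Mpp, hsum, mul_zero, Real.zero_rpow (one_div_pos.2 hp).ne']

lemma Hnorm_eq_Mp_of_supported_on_level {p : ℝ} (hp : 0 < p) {f : T.V → ℂ} {n : ℕ}
    (hf : ∀ v, T.level v ≠ n → f v = 0) : T.Hnorm p f = T.Mp p f n := by
  have hle : ∀ m, T.Mp p f m ≤ T.Mp p f n := by
    intro m
    rcases eq_or_ne m n with rfl | hm
    · rfl
    rw [T.Mp_eq_zero_of_vanishes_on_level hp fun v hv => hf v (T.mem_levelFinset.1 hv ▸ hm)]
    exact T.Mp_nonneg p f n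
  exact le_antisymm (ciSup_le hle) (le_ciSup ⟨_, Set.forall_mem_range.2 hle⟩ n)

lemma memHp0_of_supported_on_level {p : ℝ} (hp : 0 < p) {f : T.V → ℂ} {n : ℕ}
    (hf : ∀ v, T.level v ≠ n → f v = 0) : T.MemHp0 p f :=
  tendsto_atTop_of_eventually_const (i₀ := n + 1) fun m hm =>
    T.Mp_eq_zero_of_vanishes_on_level hp fun v hv => hf v (by rw [T.mem_levelFinset.1 hv]; omega)

variable {T} in
lemma MemHp0.memHp {p : ℝ} {f : T.V → ℂ} (hf : T.MemHp0 p f) : T.MemHp p f :=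
  let ⟨C, hC⟩ := hf.bddAbove_range; ⟨C, fun n => hC ⟨n, rfl⟩⟩

variable {T} in
lemma MemHp.bddAbove_range_Mp {p : ℝ} {f : T.V → ℂ} (hf : T.MemHp p f) :
    BddAbove (Set.range (T.Mp p f)) :=
  let ⟨C, hC⟩ := hf; ⟨C, Set.forall_mem_range.2 hC⟩

noncomputable def shiftWeight (p : ℝ) (n : ℕ) : ℝ :=
  (T.K 1 n : ℝ) ^ (p - 1) * (T.gamma (n + 1) : ℝ) / (T.gamma n : ℝ)

lemma shiftWeight_nonneg (p : ℝ) (n : ℕ) : 0 ≤ T.shiftWeight p n := by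
  unfold shiftWeight
  positivity

lemma rpow_iSup_shiftWeight_nonneg (p : ℝ) : 0 ≤ (⨆ m, T.shiftWeight p m) ^ (1 / p) :=
  Real.rpow_nonneg (Real.iSup_nonneg (T.shiftWeight_nonneg p)) _

lemma Mpp_B_le {p : ℝ} (hp : 1 ≤ p) (f : T.V → ℂ) (n : ℕ) :
    T.Mpp p (T.B f) n ≤ T.shiftWeight p n * T.Mpp p f (n + 1) := by
  have hγ : (0 : ℝ) < T.gamma n := by exact_mod_cast T.gamma_pos n
  have hγ' : (0 : ℝ) < T.gamma (n + 1) := by exact_mod_cast T.gamma_pos (n + 1)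
  have hlevel : ∑ v ∈ T.levelFinset n, ‖T.B f v‖ ^ p
      ≤ (T.K 1 n : ℝ) ^ (p - 1) * ∑ w ∈ T.levelFinset (n + 1), ‖f w‖ ^ p := by
    rw [T.sum_levelFinset_succ n, Finset.mul_sum]
    refine Finset.sum_le_sum fun v hv => ?_
    calc ‖T.B f v‖ ^ p
        ≤ (∑ w ∈ T.childrenFinset v, ‖f w‖) ^ p := by
          gcongr
          exact norm_sum_le _ _
      _ ≤ (T.numChildren v : ℝ) ^ (p - 1) * ∑ w ∈ T.childrenFinset v, ‖f w‖ ^ p :=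
          Real.rpow_sum_le_const_mul_sum_rpow_of_nonneg _ hp fun w _ => norm_nonneg _
      _ ≤ (T.K 1 n : ℝ) ^ (p - 1) * ∑ w ∈ T.childrenFinset v, ‖f w‖ ^ p := by
          gcongr
          exact_mod_cast T.numChildren_le_K hv
  calc T.Mpp p (T.B f) n
      ≤ 1 / (T.gamma n : ℝ) * ((T.K 1 n : ℝ) ^ (p - 1) *
          ∑ w ∈ T.levelFinset (n + 1), ‖f w‖ ^ p) := by
        unfold Mpp
        gcongr
    _ = T.shiftWeight p n * T.Mpp p f (n + 1) := by
        unfold shiftWeight Mpp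
        field_simp

lemma Mp_B_le {p : ℝ} (hp : 1 ≤ p) (f : T.V → ℂ) (n : ℕ) :
    T.Mp p (T.B f) n ≤ T.shiftWeight p n ^ (1 / p) * T.Mp p f (n + 1) := by
  rw [Mp, Mp, ← Real.mul_rpow (T.shiftWeight_nonneg p n) (T.Mpp_nonneg p f (n + 1))]
  exact Real.rpow_le_rpow (T.Mpp_nonneg p _ n) (T.Mpp_B_le hp f n) (by positivity)

lemma Mp_B_le_of_bddAbove {p : ℝ} (hp : 1 ≤ p) (hbdd : BddAbove (Set.range (T.shiftWeight p)))
    (f : T.V → ℂ) (n : ℕ) :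
    T.Mp p (T.B f) n ≤ (⨆ m, T.shiftWeight p m) ^ (1 / p) * T.Mp p f (n + 1) := by
  refine (T.Mp_B_le hp f n).trans (mul_le_mul_of_nonneg_right ?_ (T.Mp_nonneg p f (n + 1)))
  exact Real.rpow_le_rpow (T.shiftWeight_nonneg p n) (le_ciSup hbdd n) (by positivity)

lemma memHp_B {p : ℝ} (hp : 1 ≤ p) (hbdd : BddAbove (Set.range (T.shiftWeight p)))
    {f : T.V → ℂ} (hf : T.MemHp p f) : T.MemHp p (T.B f) := by
  obtain ⟨C, hC⟩ := hf
  exact ⟨_, fun n => (T.Mp_B_le_of_bddAbove hp hbdd f n).trans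
    (mul_le_mul_of_nonneg_left (hC (n + 1)) (T.rpow_iSup_shiftWeight_nonneg p))⟩

lemma memHp0_B {p : ℝ} (hp : 1 ≤ p) (hbdd : BddAbove (Set.range (T.shiftWeight p)))
    {f : T.V → ℂ} (hf : T.MemHp0 p f) : T.MemHp0 p (T.B f) := by
  have hlim := (hf.comp (Filter.tendsto_add_atTop_nat 1)).const_mul
    ((⨆ m, T.shiftWeight p m) ^ (1 / p))
  rw [mul_zero] at hlim
  exact squeeze_zero (T.Mp_nonneg p _) (T.Mp_B_le_of_bddAbove hp hbdd f) hlim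

lemma Hnorm_B_le {p : ℝ} (hp : 1 ≤ p) (hbdd : BddAbove (Set.range (T.shiftWeight p)))
    {f : T.V → ℂ} (hf : T.MemHp p f) :
    T.Hnorm p (T.B f) ≤ (⨆ m, T.shiftWeight p m) ^ (1 / p) * T.Hnorm p f := by
  exact ciSup_le fun n => (T.Mp_B_le_of_bddAbove hp hbdd f n).trans
    (mul_le_mul_of_nonneg_left (le_ciSup hf.bddAbove_range_Mp (n + 1))
      (T.rpow_iSup_shiftWeight_nonneg p))

noncomputable def childIndicator (v : T.V) : T.V → ℂ :=
  fun w => if w ∈ T.childrenFinset v then 1 else 0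

lemma childIndicator_eq_zero_of_level_ne {v w : T.V} (hw : T.level w ≠ T.level v + 1) :
    T.childIndicator v w = 0 :=
  if_neg fun hmem => hw (T.mem_childrenFinset.1 hmem).1

lemma B_childIndicator (v u : T.V) :
    T.B (T.childIndicator v) u = if u = v then (T.numChildren v : ℂ) else 0 := by
  unfold B childIndicator
  split_ifs with huv
  · subst huv
    rw [Finset.sum_congr rfl fun w hw => if_pos hw]
    simp [numChildren, numNChildren, childrenFinset]
  · refine Finset.sum_eq_zero fun w hw => if_neg fun hw' => huv ?_
    rw [← (T.mem_childrenFinset.1 hw).2, (T.mem_childrenFinset.1 hw').2]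

lemma Hnorm_childIndicator {p : ℝ} (hp : 0 < p) (v : T.V) :
    T.Hnorm p (T.childIndicator v)
      = ((T.numChildren v : ℝ) / T.gamma (T.level v + 1)) ^ (1 / p) := by
  have hsub : T.childrenFinset v ⊆ T.levelFinset (T.level v + 1) := fun w hw =>
    T.mem_levelFinset.2 (T.mem_childrenFinset.1 hw).1
  have hsum : ∑ w ∈ T.levelFinset (T.level v + 1), ‖T.childIndicator v w‖ ^ p
      = T.numChildren v := by
    simp only [childIndicator, apply_ite (fun z : ℂ => ‖z‖ ^ p), norm_one, norm_zero,
      Real.one_rpow, Real.zero_rpow hp.ne', Finset.sum_boole, Finset.filter_mem_eq_inter,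
      Finset.inter_eq_right.2 hsub]
    rfl
  rw [T.Hnorm_eq_Mp_of_supported_on_level hp fun w => T.childIndicator_eq_zero_of_level_ne,
    Mp, Mpp, hsum, one_div_mul_eq_div]

lemma Hnorm_B_childIndicator {p : ℝ} (hp : 0 < p) (v : T.V) :
    T.Hnorm p (T.B (T.childIndicator v))
      = ((T.numChildren v : ℝ) ^ p / T.gamma (T.level v)) ^ (1 / p) := by
  have hsupp : ∀ u, T.level u ≠ T.level v → T.B (T.childIndicator v) u = 0 := fun u hu => by
    rw [B_childIndicator, if_neg (by rintro rfl; exact hu rfl)]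
  have hsum : ∑ u ∈ T.levelFinset (T.level v), ‖T.B (T.childIndicator v) u‖ ^ p
      = (T.numChildren v : ℝ) ^ p := by
    simp only [B_childIndicator, apply_ite (fun z : ℂ => ‖z‖ ^ p), Complex.norm_natCast,
      norm_zero, Real.zero_rpow hp.ne', Finset.sum_ite_eq', T.mem_levelFinset, if_true]
  rw [T.Hnorm_eq_Mp_of_supported_on_level hp hsupp, Mp, Mpp, hsum, one_div_mul_eq_div]

lemma shiftWeight_le_rpow {p C : ℝ} (hp : 0 < p) (hC : 0 ≤ C)
    (h : ∀ v, T.Hnorm p (T.B (T.childIndicator v)) ≤ C * T.Hnorm p (T.childIndicator v))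
    (n : ℕ) : T.shiftWeight p n ≤ C ^ p := by
  obtain ⟨v, hv, hvK⟩ := T.exists_numChildren_eq_K n
  have hK : (0 : ℝ) < T.K 1 n := by exact_mod_cast T.one_le_K n
  have hγ : (0 : ℝ) < T.gamma n := by exact_mod_cast T.gamma_pos n
  have hγ' : (0 : ℝ) < T.gamma (n + 1) := by exact_mod_cast T.gamma_pos (n + 1)
  have hbound := h v
  rw [T.Hnorm_B_childIndicator hp, T.Hnorm_childIndicator hp, T.mem_levelFinset.1 hv, hvK,
    ← Real.rpow_rpow_inv hC hp.ne', one_div, ← Real.mul_rpow (by positivity) (by positivity),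
    Real.rpow_le_rpow_iff (by positivity) (by positivity) (by positivity)] at hbound
  calc T.shiftWeight p n
      = ((T.K 1 n : ℝ) ^ p / T.gamma n) / ((T.K 1 n : ℝ) / T.gamma (n + 1)) := by
        rw [shiftWeight, Real.rpow_sub hK, Real.rpow_one]
        field_simp
    _ ≤ C ^ p := by
        rwa [div_le_iff₀ (by positivity)]

section BoundedOn

variable {T} {p : ℝ} {Mem : (T.V → ℂ) → Prop}

lemma bddAbove_shiftWeight_of_boundedOn (hp : 0 < p) (hχ : ∀ v, Mem (T.childIndicator v))
    (hB : T.BoundedOn T.B Mem p) : BddAbove (Set.range (T.shiftWeight p)) := by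
  obtain ⟨C, hC, hbound⟩ := hB
  exact ⟨C ^ p, Set.forall_mem_range.2 <|
    T.shiftWeight_le_rpow hp hC fun v => (hbound _ (hχ v)).2⟩

lemma isLeast_boundedOn_constants (hp : 1 ≤ p) (hχ : ∀ v, Mem (T.childIndicator v))
    (hMp : ∀ f, Mem f → T.MemHp p f) (hB : ∀ f, Mem f → Mem (T.B f))
    (hbdd : BddAbove (Set.range (T.shiftWeight p))) :
    IsLeast {C : ℝ | 0 ≤ C ∧ ∀ f, Mem f → Mem (T.B f) ∧ T.Hnorm p (T.B f) ≤ C * T.Hnorm p f}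
      ((⨆ n, T.shiftWeight p n) ^ (1 / p)) := by
  have hp0 : 0 < p := one_pos.trans_le hp
  refine ⟨⟨T.rpow_iSup_shiftWeight_nonneg p, fun f hf => ⟨hB f hf, T.Hnorm_B_le hp hbdd (hMp f hf)⟩⟩, ?_⟩
  rintro C ⟨hC, hbound⟩
  have hle : (⨆ n, T.shiftWeight p n) ≤ C ^ p :=
    ciSup_le (T.shiftWeight_le_rpow hp0 hC fun v => (hbound _ (hχ v)).2)
  calc (⨆ n, T.shiftWeight p n) ^ (1 / p) ≤ (C ^ p) ^ (1 / p) :=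
        Real.rpow_le_rpow (Real.iSup_nonneg (T.shiftWeight_nonneg p)) hle (by positivity)
    _ = C := by rw [one_div, Real.rpow_rpow_inv hC hp0.ne']

theorem boundedOn_B_iff_and_opNorm_eq (hp : 1 ≤ p) (hχ : ∀ v, Mem (T.childIndicator v))
    (hMp : ∀ f, Mem f → T.MemHp p f)
    (hB : BddAbove (Set.range (T.shiftWeight p)) → ∀ f, Mem f → Mem (T.B f)) :
    (T.BoundedOn T.B Mem p ↔ BddAbove (Set.range (T.shiftWeight p))) ∧
    (T.BoundedOn T.B Mem p →
      T.opNorm T.B Mem p = (⨆ n, T.shiftWeight p n) ^ (1 / p)) := by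
  have hnec := bddAbove_shiftWeight_of_boundedOn (one_pos.trans_le hp) hχ
  have hleast := fun hbdd => isLeast_boundedOn_constants hp hχ hMp (hB hbdd) hbdd
  exact ⟨⟨hnec, fun hbdd => ⟨_, (hleast hbdd).1⟩⟩, fun h => (hleast (hnec h)).csInf_eq⟩

end BoundedOn

end HTree

/-- boundedness and norm of the backward shift on `H^p(T)` and `H^p_0(T)`. -/
theorem backward_shift_bounded (T : HTree) (p : ℝ) (hp : 1 ≤ p) :
    (T.BoundedOn T.B (T.MemHp p) p ↔
      BddAbove (Set.range fun n : ℕ =>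
        (T.K 1 n : ℝ) ^ (p - 1) * (T.gamma (n + 1) : ℝ) / (T.gamma n : ℝ))) ∧
    (T.BoundedOn T.B (T.MemHp p) p →
      T.opNorm T.B (T.MemHp p) p =
        (⨆ n : ℕ, (T.K 1 n : ℝ) ^ (p - 1) * (T.gamma (n + 1) : ℝ) / (T.gamma n : ℝ))
          ^ (1 / p)) ∧
    (T.BoundedOn T.B (T.MemHp0 p) p ↔
      BddAbove (Set.range fun n : ℕ =>
        (T.K 1 n : ℝ) ^ (p - 1) * (T.gamma (n + 1) : ℝ) / (T.gamma n : ℝ))) ∧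
    (T.BoundedOn T.B (T.MemHp0 p) p →
      T.opNorm T.B (T.MemHp0 p) p =
        (⨆ n : ℕ, (T.K 1 n : ℝ) ^ (p - 1) * (T.gamma (n + 1) : ℝ) / (T.gamma n : ℝ))
          ^ (1 / p)) := by
  have hp0 : 0 < p := one_pos.trans_le hp
  have hχ0 : ∀ v, T.MemHp0 p (T.childIndicator v) := fun _ =>
    T.memHp0_of_supported_on_level hp0 fun _ => T.childIndicator_eq_zero_of_level_ne
  obtain ⟨hHp_iff, hHp_norm⟩ := T.boundedOn_B_iff_and_opNorm_eq hp (fun v => (hχ0 v).memHp)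
    (fun _ => id) fun hbdd _ => T.memHp_B hp hbdd
  obtain ⟨hHp0_iff, hHp0_norm⟩ := T.boundedOn_B_iff_and_opNorm_eq hp hχ0
    (fun _ hf => hf.memHp) fun hbdd _ => T.memHp0_B hp hbdd
  exact ⟨hHp_iff, hHp_norm, hHp0_iff, hHp0_norm⟩
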